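/- arXiv:1810.07494 — 2 statements merged into one kernel-verified Lean document; each statement's English description precedes it below -/
import Mathlib

section
/- Let m be a positive integer and p, q integers with 0 ≤ p, q ≤ m and p + q = m. Then the sum over k from 0 to m of C(m,k) · (Σ_{i=0}^{q} C(m-k,i)·C(k,q-i)·(-1)^i)^2 equals 2^m · C(m,q), which also equals 2^m · C(m,p). -/
/-!
Write `f ⊠ f` for the polynomial `f(x) f(y)` in two variables, realised as `f.map C * C f` in
`R[X][X]` (so `x` is the outer variable and `y = C X`). Since `f ↦ f ⊠ f` is
multiplicative, the binomial theorem gives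
`∑ₖ C(m,k) (u^k v^(m-k)) ⊠ (u^k v^(m-k)) = (u ⊠ u + v ⊠ v)^m`, and the coefficient of `x^i y^j`
on the left is `∑ₖ C(m,k) [x^i](u^k v^(m-k)) · [x^j](u^k v^(m-k))`. For `u = 1 + x`, `v = 1 - x`
we have `u ⊠ u + v ⊠ v = 2 (1 + x y)`, whose `m`-th power has `x^q y^q`-coefficient
`2^m C(m,q)`, while `[x^q]((1+x)^k (1-x)^(m-k))` is the inner alternating sum.
-/

open Polynomial Finset

section CommSemiring

variable {R : Type*} [CommSemiring R]

theorem coeff_one_add_C_mul_X_pow (a : R) (n k : ℕ) :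
    ((1 + C a * X) ^ n).coeff k = a ^ k * n.choose k := by
  simp only [add_comm (1 : R[X]), add_pow, one_pow, mul_one, mul_pow, ← C_pow, finsetSum_coeff,
    coeff_mul_natCast, coeff_C_mul_X_pow, ite_mul, zero_mul]
  rw [sum_ite_eq]
  split_ifs with hk
  · rfl
  · rw [Nat.choose_eq_zero_of_lt (by simpa using hk), Nat.cast_zero, mul_zero]

theorem coeff_coeff_map_C_mul_C (f g : R[X]) (i j : ℕ) :
    ((f.map C * C g).coeff i).coeff j = f.coeff i * g.coeff j := by
  rw [coeff_mul_C, coeff_map, coeff_C_mul]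

theorem sum_choose_mul_coeff_mul_coeff (u v : R[X]) (m i j : ℕ) :
    ∑ k ∈ range (m + 1), (m.choose k : R) * ((u ^ k * v ^ (m - k)).coeff i *
      (u ^ k * v ^ (m - k)).coeff j) =
      (((u.map C * C u + v.map C * C v) ^ m).coeff i).coeff j := by
  rw [add_pow, finsetSum_coeff, finsetSum_coeff]
  refine sum_congr rfl fun k _ => ?_
  have hsplit : (u.map C * C u) ^ k * (v.map C * C v) ^ (m - k) * (m.choose k : R[X][X]) =
      (u ^ k * v ^ (m - k)).map C * C (u ^ k * v ^ (m - k) * (m.choose k : R[X])) := by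
    simp only [Polynomial.map_mul, Polynomial.map_pow, map_mul, map_pow, map_natCast]
    ring
  rw [hsplit, coeff_coeff_map_C_mul_C, coeff_mul_natCast]
  ring

end CommSemiring

theorem coeff_one_add_X_pow_mul_one_sub_X_pow (a b q : ℕ) :
    ((1 + X : ℤ[X]) ^ b * (1 - X) ^ a).coeff q =
      ∑ i ∈ range (q + 1), (-1 : ℤ) ^ i * (a.choose i : ℤ) * (b.choose (q - i) : ℤ) := by
  have hsub : (1 - X : ℤ[X]) = 1 + C (-1) * X := by simp [sub_eq_add_neg]
  rw [mul_comm, coeff_mul, Nat.sum_antidiagonal_eq_sum_range_succ_mk]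
  refine sum_congr rfl fun i _ => ?_
  rw [hsub, coeff_one_add_C_mul_X_pow, coeff_one_add_X_pow]

theorem sum_choose_mul_sq_coeff_one_add_X_pow_mul_one_sub_X_pow (m q : ℕ) :
    ∑ k ∈ range (m + 1), (m.choose k : ℤ) * ((1 + X : ℤ[X]) ^ k * (1 - X) ^ (m - k)).coeff q ^ 2 =
      (2 ^ m * m.choose q : ℤ) := by
  have hbase : ((1 + X : ℤ[X]).map C * C (1 + X) + (1 - X : ℤ[X]).map C * C (1 - X)) =
      C (C 2) * (1 + C X * X) := by
    simp only [Polynomial.map_add, Polynomial.map_sub, Polynomial.map_one, map_X, map_add,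
      map_sub, map_one, map_ofNat]
    ring
  simp only [sq]
  rw [sum_choose_mul_coeff_mul_coeff, hbase, mul_pow, ← C_pow, coeff_C_mul,
    coeff_one_add_C_mul_X_pow, ← C_pow, coeff_C_mul, coeff_X_pow_mul', if_pos le_rfl,
    Nat.sub_self, coeff_natCast_ite, if_pos rfl]

theorem stmt_1_general (m : ℕ) (p q : ℕ) (hpq : p + q = m) :
    ∑ k ∈ range (m + 1), (m.choose k : ℤ) *
      (∑ i ∈ range (q + 1), ((-1 : ℤ)) ^ i * ((m - k).choose i) * (k.choose (q - i))) ^ 2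
      = 2 ^ m * (m.choose q) ∧
    (2 ^ m * (m.choose q) : ℤ) = 2 ^ m * (m.choose p) := by
  constructor
  · simp_rw [← coeff_one_add_X_pow_mul_one_sub_X_pow]
    exact sum_choose_mul_sq_coeff_one_add_X_pow_mul_one_sub_X_pow m q
  · rw [← hpq, Nat.choose_symm_add]

theorem stmt_1 (m : ℕ) (hm : 0 < m) (p q : ℕ) (hp : p ≤ m) (hq : q ≤ m)
    (hpq : p + q = m) :
    ∑ k ∈ range (m + 1), (m.choose k : ℤ) *
      (∑ i ∈ range (q + 1), ((-1 : ℤ)) ^ i * ((m - k).choose i) * (k.choose (q - i))) ^ 2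
      = 2 ^ m * (m.choose q) ∧
    (2 ^ m * (m.choose q) : ℤ) = 2 ^ m * (m.choose p) :=
  stmt_1_general m p q hpq
end

section
/- Let {T(t)}_{t≥0} be a C₀-semigroup on a Hilbert space H and m a positive integer. If there exists t₁ > 0 such that T(t) is an m-isometry for every t ∈ [0, t₁], then T(t) is an m-isometry for every t ≥ 0. -/
/-!
If `S` is an `m`-isometry then, for every `x`, the sequence `j ↦ ‖S^j x‖²` has vanishing `m`-th
forward differences of step `1`. A difference of step `n` is a sum of shifted differences of step
`1`, so the `m`-th differences of step `n` vanish too, which says exactly that `S^n` is an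
`m`-isometry. Any `t ≥ 0` is `n * s` with `s ∈ [0, t₁]`, and `T (n * s) = T s ^ n`.
-/

open Finset Function
open scoped fwdDiff

section ForwardDifference

variable {M G : Type*} [AddCommMonoid M] [AddCommGroup G]

lemma fwdDiff_nsmul_eq_sum (h : M) (n : ℕ) (f : M → G) :
    Δ_[n • h] f = ∑ j ∈ range n, fun y => Δ_[h] f (y + j • h) := by
  funext y
  have telescope := sum_range_sub (fun i => f (y + i • h)) n
  simp only [zero_smul, add_zero, succ_nsmul, ← add_assoc] at telescope
  simp only [fwdDiff, Finset.sum_apply, telescope]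

lemma fwdDiff_nsmul_iter_eq_zero {h : M} {m : ℕ} {f : M → G} (hf : (Δ_[h])^[m] f = 0) (n : ℕ) :
    (Δ_[n • h])^[m] f = 0 := by
  induction m generalizing f with
  | zero => exact hf
  | succ m ih =>
    rw [iterate_succ_apply, fwdDiff_nsmul_eq_sum, fwdDiff_iter_finsetSum]
    refine sum_eq_zero fun j _ => ih ?_
    funext y
    rw [fwdDiff_iter_comp_add, ← iterate_succ_apply, hf, Pi.zero_apply, Pi.zero_apply]

end ForwardDifference

section MIsometry

variable {𝕜 E : Type*} [NontriviallyNormedField 𝕜] [NormedAddCommGroup E] [NormedSpace 𝕜 E]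

def IsMIsometry (m : ℕ) (S : E →L[𝕜] E) : Prop :=
  ∀ x : E, ∑ k ∈ range (m + 1), ((-1 : ℝ)) ^ (m - k) * (m.choose k) * ‖(S ^ k) x‖ ^ 2 = 0

lemma fwdDiff_iter_normSq_orbit (S : E →L[𝕜] E) (m n : ℕ) (x : E) (y : ℕ) :
    (Δ_[n])^[m] (fun j => ‖(S ^ j) x‖ ^ 2) y =
      ∑ k ∈ range (m + 1),
        ((-1 : ℝ)) ^ (m - k) * (m.choose k) * ‖((S ^ n) ^ k) ((S ^ y) x)‖ ^ 2 := by
  rw [fwdDiff_iter_eq_sum_shift]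
  refine sum_congr rfl fun k _ => ?_
  rw [smul_eq_mul, add_comm, pow_add, ← pow_mul, mul_comm k n, zsmul_eq_mul]
  push_cast
  rfl

lemma IsMIsometry.fwdDiff_iter_normSq_orbit_eq_zero {m : ℕ} {S : E →L[𝕜] E}
    (hS : IsMIsometry m S) (x : E) : (Δ_[1])^[m] (fun j => ‖(S ^ j) x‖ ^ 2) = 0 := by
  funext y
  rw [fwdDiff_iter_normSq_orbit, pow_one]
  exact hS _

lemma IsMIsometry.pow {m : ℕ} {S : E →L[𝕜] E} (hS : IsMIsometry m S) (n : ℕ) :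
    IsMIsometry m (S ^ n) := by
  intro x
  have h := congrFun (fwdDiff_nsmul_iter_eq_zero (hS.fwdDiff_iter_normSq_orbit_eq_zero x) n) 0
  rwa [smul_eq_mul, mul_one, fwdDiff_iter_normSq_orbit, pow_zero, one_apply_eq_self] at h

end MIsometry

lemma natCast_mul_eq_pow_of_semigroup {M : Type*} [Monoid M] {T : ℝ → M} (hT0 : T 0 = 1)
    (hTsem : ∀ s t : ℝ, 0 ≤ s → 0 ≤ t → T (s + t) = T t * T s) (n : ℕ) {s : ℝ} (hs : 0 ≤ s) :
    T (n * s) = T s ^ n := by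
  induction n with
  | zero => simpa using hT0
  | succ n ih =>
    rw [Nat.cast_succ, add_one_mul, hTsem _ s (by positivity) hs, ih, pow_succ']

lemma exists_eq_natCast_mul_of_mem_Icc {t₁ t : ℝ} (ht₁ : 0 < t₁) (ht : 0 ≤ t) :
    ∃ n : ℕ, ∃ s ∈ Set.Icc 0 t₁, t = n * s := by
  rcases ht.eq_or_lt with rfl | htpos
  · exact ⟨0, 0, ⟨le_rfl, ht₁.le⟩, by simp⟩
  have hn : (0 : ℝ) < ⌈t / t₁⌉₊ := Nat.cast_pos.mpr (Nat.ceil_pos.mpr (by positivity))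
  refine ⟨⌈t / t₁⌉₊, t / ⌈t / t₁⌉₊, ⟨by positivity, ?_⟩, by field_simp⟩
  rw [div_le_iff₀ hn, mul_comm, ← div_le_iff₀ ht₁]
  exact Nat.le_ceil _

theorem stmt_4_general {H : Type*} [NormedAddCommGroup H] [InnerProductSpace ℂ H]
    (T : ℝ → H →L[ℂ] H) (m : ℕ)
    (hT0 : T 0 = 1)
    (hTsem : ∀ s t : ℝ, 0 ≤ s → 0 ≤ t → T (s + t) = T t ∘L T s)
    (t₁ : ℝ) (ht₁ : 0 < t₁)
    (hiso : ∀ t ∈ Set.Icc (0 : ℝ) t₁, ∀ x : H, ∑ k ∈ range (m + 1),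
      ((-1 : ℝ)) ^ (m - k) * (m.choose k) * ‖((T t) ^ k) x‖ ^ 2 = 0) :
    ∀ t : ℝ, 0 ≤ t → ∀ x : H, ∑ k ∈ range (m + 1),
      ((-1 : ℝ)) ^ (m - k) * (m.choose k) * ‖((T t) ^ k) x‖ ^ 2 = 0 := by
  intro t ht
  obtain ⟨n, s, hs, rfl⟩ := exists_eq_natCast_mul_of_mem_Icc ht₁ ht
  rw [natCast_mul_eq_pow_of_semigroup hT0 hTsem n hs.1]
  exact IsMIsometry.pow (hiso s hs) n

theorem stmt_4 {H : Type*} [NormedAddCommGroup H] [InnerProductSpace ℂ H] [CompleteSpace H]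
    (T : ℝ → H →L[ℂ] H) (m : ℕ) (hm : 0 < m)
    (hT0 : T 0 = 1)
    (hTsem : ∀ s t : ℝ, 0 ≤ s → 0 ≤ t → T (s + t) = T t ∘L T s)
    (hTcont : ∀ x : H, Filter.Tendsto (fun t => T t x) (nhdsWithin 0 (Set.Ioi 0)) (nhds x))
    (t₁ : ℝ) (ht₁ : 0 < t₁)
    (hiso : ∀ t ∈ Set.Icc (0 : ℝ) t₁, ∀ x : H, ∑ k ∈ range (m + 1),
      ((-1 : ℝ)) ^ (m - k) * (m.choose k) * ‖((T t) ^ k) x‖ ^ 2 = 0) :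
    ∀ t : ℝ, 0 ≤ t → ∀ x : H, ∑ k ∈ range (m + 1),
      ((-1 : ℝ)) ^ (m - k) * (m.choose k) * ‖((T t) ^ k) x‖ ^ 2 = 0 :=
  stmt_4_general T m hT0 hTsem t₁ ht₁ hiso
end
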